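/- Suppose Ψ ∈ R satisfies the non-stationary relativistic Toda equation Ψ(tΛ, x) = γ̂[ ∏_{n≥0}(1 + q^n x/Q)^{-1}(1 + q^{n+1} Λ/x)^{-1} · γ̂( Ψ(Λ, x/(tqQ)) ) ]. Then for every integer M ≥ 0: Ψ(Λ, x) = B₀ ∘ B₁ ∘ ⋯ ∘ B_M ( Ψ( Λ/t^{M+1}, x/(tqQ)^{M+1} ) ), where for each m ≥ 0 the operator B_m on R is defined by B_m(f) = γ̂[ ∏_{n≥0} (1 + q^{n−m} t^{−m} x Q^{−(m+1)})^{-1} (1 + q^{n+m+1} t^{−1} Λ Q^{m} x^{-1})^{-1} · γ̂(f) ]. -/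

import Mathlib

/-!
STATEMENT 15.  If `Ψ ∈ R = F((x))[[Λ]]` satisfies the non-stationary relativistic
Toda equation `Ψ(tΛ,x) = γ̂[A(Λ,x)·γ̂(Ψ(Λ,x/(tqQ)))]` with
`A(Λ,x) = ∏_{n≥0}(1+qⁿx/Q)⁻¹(1+q^{n+1}Λ/x)⁻¹`, then for every `M ≥ 0`
`Ψ(Λ,x) = B₀∘B₁∘⋯∘B_M (Ψ(Λ/t^{M+1}, x/(tqQ)^{M+1}))`, where
`B_m(f) = γ̂[∏_{n≥0}(1+q^{n−m}t^{−m}xQ^{−(m+1)})⁻¹(1+q^{n+m+1}t^{−1}ΛQᵐ/x)⁻¹·γ̂(f)]`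
(Theorem 24 of the paper).
-/

noncomputable section

open PowerSeries Finset

/-- `F = ℚ(q,t,Q)`. -/
abbrev F : Type := FractionRing (MvPolynomial (Fin 3) ℚ)

def q : F := algebraMap (MvPolynomial (Fin 3) ℚ) F (MvPolynomial.X 0)
def t : F := algebraMap (MvPolynomial (Fin 3) ℚ) F (MvPolynomial.X 1)
def Q : F := algebraMap (MvPolynomial (Fin 3) ℚ) F (MvPolynomial.X 2)

/-- `F((x))`. -/
abbrev LS : Type := LaurentSeries F
/-- `R = F((x))[[Λ]]`. -/
abbrev R : Type := PowerSeries LS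

/-- The operator on Laurent series multiplying the coefficient of `x^n` by `c n`. -/
def diagX (c : ℤ → F) (f : LS) : LS where
  coeff n := c n * f.coeff n
  isPWO_support' := f.isPWO_support'.mono (by
    intro n hn
    simp only [Function.mem_support, ne_eq] at hn ⊢
    exact fun h => hn (by rw [h, mul_zero]))

/-- The continuous `F`-linear operator on `R` multiplying the coefficient of
`Λ^m x^n` by `c n`. -/
def onX (c : ℤ → F) (f : R) : R := PowerSeries.mk fun m => diagX c (PowerSeries.coeff m f)

/-- `γ̂`, with `γ̂(Λ^m x^n) = q^{n(n+1)/2} Λ^m x^n`. -/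
def gammaHat : R → R := onX fun n => q ^ (n * (n + 1) / 2)

/-- The substitution `x ↦ a x`. -/
def subX (a : F) : R → R := onX fun n => a ^ n

/-- The substitution `Λ ↦ a Λ`. -/
def subL (a : F) (f : R) : R :=
  PowerSeries.mk fun m => HahnSeries.C (a ^ m) * PowerSeries.coeff m f

/-- q-Pochhammer symbol `(z)_n = ∏_{i<n} (1 - qⁱ z)`. -/
def poch (z : F) (n : ℕ) : F := ∏ i ∈ Finset.range n, (1 - q ^ i * z)

/-- `∏_{i≥0}(1 - qⁱ a x)⁻¹ ∈ F((x)) ⊆ R`, via the Euler expansion `Σ_n aⁿxⁿ/(q)_n`. -/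
def iphiX (a : F) : R :=
  PowerSeries.C (HahnSeries.ofPowerSeries ℤ F (PowerSeries.mk fun n => a ^ n / poch q n))

/-- `∏_{i≥0}(1 - qⁱ a Λ)⁻¹ ∈ R` for `a ∈ F((x))` (with `a` a multiple of `x⁻¹`
this covers factors `(1 - qⁱ c Λ/x)⁻¹`). -/
def iphiL (a : LS) : R := PowerSeries.mk fun m => HahnSeries.C (poch q m)⁻¹ * a ^ m

/-- `A(Λ,x) = ∏_{n≥0}(1 + qⁿ x/Q)⁻¹ (1 + q^{n+1} Λ/x)⁻¹ ∈ R`. -/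
def Aelem : R := iphiX (-Q⁻¹) * iphiL (HahnSeries.single (-1 : ℤ) (-q))

/-- The operator `B_m(f) = γ̂[ ∏_{n≥0}(1 + q^{n−m} t^{−m} x Q^{−(m+1)})⁻¹
(1 + q^{n+m+1} t^{−1} Λ Qᵐ x⁻¹)⁻¹ · γ̂(f) ]`. -/
def B (m : ℕ) : R → R := fun f =>
  gammaHat (iphiX (-(q ^ (-(m : ℤ)) * t ^ (-(m : ℤ)) * Q ^ (-((m : ℤ) + 1)))) *
    iphiL (HahnSeries.single (-1 : ℤ) (-(q ^ ((m : ℤ) + 1) * Q ^ (m : ℤ) / t))) *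
    gammaHat f)

/-- The composition `B₀ ∘ B₁ ∘ ⋯ ∘ B_M`. -/
def Bcomp : ℕ → (R → R)
  | 0 => B 0
  | M + 1 => Bcomp M ∘ B (M + 1)

/-! ### Auxiliary lemmas -/

lemma diagX_coeff (c : ℤ → F) (f : LS) (n : ℤ) : (diagX c f).coeff n = c n * f.coeff n := rfl

lemma diagX_support (c : ℤ → F) (f : LS) : (diagX c f).support ⊆ f.support := by
  intro n hn
  rw [HahnSeries.mem_support, diagX_coeff] at hn
  rw [HahnSeries.mem_support]
  exact fun h => hn (by rw [h, mul_zero])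

lemma diagX_zero (c : ℤ → F) : diagX c 0 = 0 := by
  ext n; simp [diagX_coeff]

lemma diagX_add (c : ℤ → F) (f g : LS) : diagX c (f + g) = diagX c f + diagX c g := by
  ext n; simp [diagX_coeff, mul_add]

/-- `diagX` as an additive monoid hom. -/
def diagXAdd (c : ℤ → F) : LS →+ LS where
  toFun := diagX c
  map_zero' := diagX_zero c
  map_add' := diagX_add c

lemma diagX_mul (c : ℤ → F) (hc : ∀ i j : ℤ, c (i + j) = c i * c j) (f g : LS) :
    diagX c (f * g) = diagX c f * diagX c g := by
  ext n
  rw [diagX_coeff]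
  calc c n * (f * g).coeff n
      = ∑ ij ∈ Finset.antidiagonal f.isPWO_support g.isPWO_support n,
          c n * (f.coeff ij.1 * g.coeff ij.2) := by
        rw [HahnSeries.coeff_mul, Finset.mul_sum]
    _ = ∑ ij ∈ Finset.antidiagonal f.isPWO_support g.isPWO_support n,
          (diagX c f).coeff ij.1 * (diagX c g).coeff ij.2 := by
        refine Finset.sum_congr rfl fun ij hij => ?_
        rw [Finset.mem_antidiagonal] at hij
        rw [diagX_coeff, diagX_coeff, ← hij.2.2, hc]
        ring
    _ = ∑ ij ∈ Finset.antidiagonal f.isPWO_support (diagX c g).isPWO_support n,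
          (diagX c f).coeff ij.1 * (diagX c g).coeff ij.2 := by
        refine (Finset.sum_subset ?_ fun ij h1 h2 => ?_).symm
        · intro ij hij
          rw [Finset.mem_antidiagonal] at hij ⊢
          exact ⟨hij.1, diagX_support c g hij.2.1, hij.2.2⟩
        · rw [Finset.mem_antidiagonal] at h1
          have hz : (diagX c g).coeff ij.2 = 0 := by
            by_contra hcon
            exact h2 (Finset.mem_antidiagonal.mpr ⟨h1.1, hcon, h1.2.2⟩)
          rw [hz, mul_zero]
    _ = (diagX c f * diagX c g).coeff n :=
        (HahnSeries.coeff_mul_left' f.isPWO_support (diagX_support c f)).symm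

lemma onX_coeff (c : ℤ → F) (f : R) (m : ℕ) :
    PowerSeries.coeff m (onX c f) = diagX c (PowerSeries.coeff m f) := by
  simp [onX]

lemma onX_mul (c : ℤ → F) (hc : ∀ i j : ℤ, c (i + j) = c i * c j) (f g : R) :
    onX c (f * g) = onX c f * onX c g := by
  apply PowerSeries.ext; intro m
  rw [onX_coeff, PowerSeries.coeff_mul, PowerSeries.coeff_mul]
  rw [show diagX c = ⇑(diagXAdd c) from rfl, map_sum]
  refine Finset.sum_congr rfl fun p _ => ?_
  show diagX c _ = _
  rw [diagX_mul c hc, onX_coeff, onX_coeff]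

lemma onX_onX (c d : ℤ → F) (f : R) :
    onX c (onX d f) = onX (fun n => c n * d n) f := by
  apply PowerSeries.ext; intro m
  rw [onX_coeff, onX_coeff, onX_coeff]
  ext n
  rw [diagX_coeff, diagX_coeff, diagX_coeff, mul_assoc]

lemma onX_one (f : R) : onX (fun _ => (1 : F)) f = f := by
  apply PowerSeries.ext; intro m
  rw [onX_coeff]
  ext n
  rw [diagX_coeff, one_mul]

lemma subL_coeff (s : F) (f : R) (m : ℕ) :
    PowerSeries.coeff m (subL s f) = HahnSeries.C (s ^ m) * PowerSeries.coeff m f := by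
  simp [subL]

lemma subX_coeff (a : F) (f : R) (m : ℕ) :
    PowerSeries.coeff m (subX a f) =
      diagX (fun n => a ^ n) (PowerSeries.coeff m f) := onX_coeff _ _ _

lemma subL_mul (s : F) (f g : R) : subL s (f * g) = subL s f * subL s g := by
  apply PowerSeries.ext; intro m
  rw [subL_coeff, PowerSeries.coeff_mul, PowerSeries.coeff_mul, Finset.mul_sum]
  refine Finset.sum_congr rfl fun p hp => ?_
  rw [subL_coeff, subL_coeff]
  have hpm : p.1 + p.2 = m := Finset.HasAntidiagonal.mem_antidiagonal.mp hp
  rw [← hpm, pow_add, map_mul]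
  ring

lemma subX_mul (a : F) (ha : a ≠ 0) (f g : R) : subX a (f * g) = subX a f * subX a g :=
  onX_mul _ (fun i j => zpow_add₀ ha i j) f g

lemma diagX_C_mul (c : ℤ → F) (a : F) (x : LS) :
    diagX c (HahnSeries.C a * x) = HahnSeries.C a * diagX c x := by
  ext n
  rw [diagX_coeff, HahnSeries.C_apply, HahnSeries.single_zero_mul_eq_smul,
    HahnSeries.single_zero_mul_eq_smul, HahnSeries.coeff_smul, HahnSeries.coeff_smul,
    diagX_coeff, smul_eq_mul, smul_eq_mul]
  ring

lemma subL_onX (s : F) (c : ℤ → F) (f : R) : subL s (onX c f) = onX c (subL s f) := by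
  apply PowerSeries.ext; intro m
  rw [subL_coeff, onX_coeff, onX_coeff, subL_coeff, diagX_C_mul]

lemma subL_subX (s a : F) (f : R) : subL s (subX a f) = subX a (subL s f) :=
  subL_onX s _ f

lemma gammaHat_subX (a : F) (f : R) : gammaHat (subX a f) = subX a (gammaHat f) := by
  show onX _ (onX _ f) = onX _ (onX _ f)
  rw [onX_onX, onX_onX]
  have hfun : (fun n : ℤ => q ^ (n * (n + 1) / 2) * a ^ n)
      = fun n : ℤ => a ^ n * q ^ (n * (n + 1) / 2) := by
    funext n; exact mul_comm _ _
  rw [hfun]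

lemma gammaHat_subL (s : F) (f : R) : gammaHat (subL s f) = subL s (gammaHat f) :=
  (subL_onX s _ f).symm

lemma subX_subX (a b : F) (f : R) : subX a (subX b f) = subX (a * b) f := by
  show onX _ (onX _ f) = onX _ f
  rw [onX_onX]
  have hfun : (fun n : ℤ => a ^ n * b ^ n) = fun n : ℤ => (a * b) ^ n := by
    funext n; rw [mul_zpow]
  rw [hfun]

lemma subX_one (f : R) : subX 1 f = f := by
  have h : (fun n : ℤ => (1 : F) ^ n) = fun _ => (1 : F) := funext fun n => one_zpow n
  show onX _ f = f
  rw [h]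
  exact onX_one f

lemma subL_subL (a b : F) (f : R) : subL a (subL b f) = subL (a * b) f := by
  apply PowerSeries.ext; intro m
  rw [subL_coeff, subL_coeff, subL_coeff, ← mul_assoc, ← map_mul, ← mul_pow]

lemma subL_one (f : R) : subL 1 f = f := by
  apply PowerSeries.ext; intro m
  rw [subL_coeff, one_pow, map_one, one_mul]

lemma ofPS_coeff_neg (f : PowerSeries F) (n : ℤ) (hn : n < 0) :
    (HahnSeries.ofPowerSeries ℤ F f).coeff n = 0 := by
  rw [HahnSeries.ofPowerSeries_apply]
  apply HahnSeries.embDomain_of_notMem_range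
  rintro ⟨k, hk⟩
  have hk' : ((k : ℕ) : ℤ) = n := hk
  omega

lemma subX_iphiX (b a : F) : subX b (iphiX a) = iphiX (b * a) := by
  apply PowerSeries.ext; intro m
  rw [subX_coeff]
  show diagX _ (PowerSeries.coeff m (PowerSeries.C _)) =
    PowerSeries.coeff m (PowerSeries.C _)
  rw [PowerSeries.coeff_C, PowerSeries.coeff_C]
  split_ifs with h
  · ext n
    rw [diagX_coeff]
    rcases lt_or_ge n 0 with hn | hn
    · rw [ofPS_coeff_neg _ _ hn, ofPS_coeff_neg _ _ hn, mul_zero]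
    · obtain ⟨k, rfl⟩ := Int.eq_ofNat_of_zero_le hn
      rw [HahnSeries.ofPowerSeries_apply_coeff, HahnSeries.ofPowerSeries_apply_coeff,
        PowerSeries.coeff_mk, PowerSeries.coeff_mk, zpow_natCast, mul_pow]
      ring
  · exact diagX_zero _

lemma subL_C (s : F) (x : LS) : subL s (PowerSeries.C x) = PowerSeries.C x := by
  apply PowerSeries.ext; intro m
  rw [subL_coeff, PowerSeries.coeff_C]
  split_ifs with h
  · subst h; rw [pow_zero, map_one, one_mul]
  · rw [mul_zero]

lemma subL_iphiX (s a : F) : subL s (iphiX a) = iphiX a := subL_C s _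

lemma iphiL_coeff (a : LS) (m : ℕ) :
    PowerSeries.coeff m (iphiL a) = HahnSeries.C (poch q m)⁻¹ * a ^ m := by
  simp [iphiL]

lemma subL_iphiL (s : F) (a : LS) : subL s (iphiL a) = iphiL (HahnSeries.C s * a) := by
  apply PowerSeries.ext; intro m
  rw [subL_coeff, iphiL_coeff, iphiL_coeff, mul_pow, ← map_pow]
  ring

lemma subX_iphiL_single (b c : F) :
    subX b (iphiL (HahnSeries.single (-1 : ℤ) c)) =
      iphiL (HahnSeries.single (-1 : ℤ) (b⁻¹ * c)) := by
  apply PowerSeries.ext; intro m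
  rw [subX_coeff, iphiL_coeff, iphiL_coeff, HahnSeries.single_pow, HahnSeries.single_pow,
    HahnSeries.C_apply, HahnSeries.single_mul_single, HahnSeries.single_mul_single]
  ext n
  rw [diagX_coeff, HahnSeries.coeff_single, HahnSeries.coeff_single]
  split_ifs with h
  · subst h
    have he : (0 + m • (-1 : ℤ)) = -(m : ℤ) := by simp
    rw [he, zpow_neg, zpow_natCast, mul_pow, inv_pow]
    ring
  · rw [mul_zero]

lemma q_ne : q ≠ 0 := by
  unfold q
  exact (map_ne_zero_iff _ (IsFractionRing.injective (MvPolynomial (Fin 3) ℚ) F)).mpr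
    (MvPolynomial.X_ne_zero 0)

lemma t_ne : t ≠ 0 := by
  unfold t
  exact (map_ne_zero_iff _ (IsFractionRing.injective (MvPolynomial (Fin 3) ℚ) F)).mpr
    (MvPolynomial.X_ne_zero 1)

lemma Q_ne : Q ≠ 0 := by
  unfold Q
  exact (map_ne_zero_iff _ (IsFractionRing.injective (MvPolynomial (Fin 3) ℚ) F)).mpr
    (MvPolynomial.X_ne_zero 2)

lemma key (Ψ : R)
    (hΨ : subL t Ψ = gammaHat (Aelem * gammaHat (subX (t * q * Q)⁻¹ Ψ))) (m : ℕ) :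
    subL (t ^ m)⁻¹ (subX ((t * q * Q) ^ m)⁻¹ Ψ) =
      B m (subL (t ^ (m + 1))⁻¹ (subX ((t * q * Q) ^ (m + 1))⁻¹ Ψ)) := by
  have hq := q_ne; have ht := t_ne; have hQ := Q_ne
  have htqQ : t * q * Q ≠ 0 := mul_ne_zero (mul_ne_zero ht hq) hQ
  have ha0 : ((t * q * Q) ^ m)⁻¹ ≠ 0 := inv_ne_zero (pow_ne_zero _ htqQ)
  have h := congrArg
    (fun f => subL (t ^ (m + 1))⁻¹ (subX ((t * q * Q) ^ m)⁻¹ f)) hΨ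
  -- left-hand side
  rw [← subL_subX, subL_subL] at h
  have e1 : (t ^ (m + 1))⁻¹ * t = (t ^ m)⁻¹ := by
    rw [pow_succ, mul_inv, mul_assoc, inv_mul_cancel₀ ht, mul_one]
  rw [e1] at h
  -- right-hand side
  rw [← gammaHat_subX, ← gammaHat_subL, subX_mul _ ha0, subL_mul, ← gammaHat_subX,
    ← gammaHat_subL, subX_subX] at h
  have hac : ((t * q * Q) ^ m)⁻¹ * (t * q * Q)⁻¹ = ((t * q * Q) ^ (m + 1))⁻¹ := by
    rw [← mul_inv, ← pow_succ]
  rw [hac] at h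
  simp only [Aelem] at h
  rw [subX_mul _ ha0, subL_mul, subX_iphiX, subL_iphiX, subX_iphiL_single, subL_iphiL,
    HahnSeries.C_apply, HahnSeries.single_mul_single, zero_add] at h
  have e2 : ((t * q * Q) ^ m)⁻¹ * -Q⁻¹ =
      -(q ^ (-(m : ℤ)) * t ^ (-(m : ℤ)) * Q ^ (-((m : ℤ) + 1))) := by
    have h1 : (-((m : ℤ) + 1)) = -(((m + 1 : ℕ) : ℤ)) := by push_cast; ring
    rw [h1, zpow_neg, zpow_neg, zpow_neg, zpow_natCast, zpow_natCast, zpow_natCast]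
    field_simp
    ring
  have e3 : (t ^ (m + 1))⁻¹ * ((((t * q * Q) ^ m)⁻¹)⁻¹ * -q) =
      -(q ^ ((m : ℤ) + 1) * Q ^ (m : ℤ) / t) := by
    have h2 : ((m : ℤ) + 1) = ((m + 1 : ℕ) : ℤ) := by push_cast; ring
    rw [h2, zpow_natCast, zpow_natCast, inv_inv]
    field_simp
    ring
  rw [e2, e3] at h
  simpa only [B] using h

/-- iterating the non-stationary Toda equation. -/
theorem stmt15 (Ψ : R)
    (hΨ : subL t Ψ = gammaHat (Aelem * gammaHat (subX (t * q * Q)⁻¹ Ψ))) :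
    ∀ M : ℕ, Ψ = Bcomp M (subL (t ^ (M + 1))⁻¹ (subX ((t * q * Q) ^ (M + 1))⁻¹ Ψ)) := by
  intro M
  induction M with
  | zero =>
      have h := key Ψ hΨ 0
      rw [pow_zero, inv_one, subL_one, pow_zero, inv_one, subX_one] at h
      exact h
  | succ M ih =>
      rw [show Bcomp (M + 1) = Bcomp M ∘ B (M + 1) from rfl, Function.comp_apply,
        ← key Ψ hΨ (M + 1)]
      exact ih
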